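/- For each fixed z ∈ (0,1) ∪ (1,∞), the q-logarithm r ↦ ln_r z = (z^(1-r) - 1)/(1-r) (with value ln z at r = 1) is strictly decreasing in r ∈ ℝ. -/

import Mathlib

/-- The `q`-logarithm (Tsallis logarithm): `ln_q x = (x^(1-q) - 1)/(1-q)` for `q ≠ 1`,
and `ln_1 x = ln x`. -/
noncomputable def qlog (q x : ℝ) : ℝ :=
  if q = 1 then Real.log x else (x ^ (1 - q) - 1) / (1 - q)

/-!
For fixed `z`, `ln_r z = (z ^ (1 - r) - 1) / (1 - r)` is the slope of the secant of the strictly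
convex function `s ↦ z ^ s` between `0` and `1 - r`, and `ln_1 z = log z` is its derivative at `0`.
Secant slopes through a fixed point of a strictly convex function increase strictly with the other
endpoint, and the derivative at the fixed point fits in between.
-/

open Set

theorem strictConvexOn_rpow_left {b : ℝ} (hb₀ : 0 < b) (hb₁ : b ≠ 1) :
    StrictConvexOn ℝ univ (fun x : ℝ => b ^ x) := by
  refine ⟨convex_univ, fun x _ y _ hxy s t hs ht hst => ?_⟩
  have hlog : Real.log b ≠ 0 := Real.log_ne_zero_of_pos_of_ne_one hb₀ hb₁
  have hne : Real.log b * x ≠ Real.log b * y := (mul_right_injective₀ hlog).ne hxy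
  simpa [Real.rpow_def_of_pos hb₀, mul_add, mul_left_comm] using
    strictConvexOn_exp.2 (mem_univ _) (mem_univ _) hne hs ht hst

theorem StrictConvexOn.strictMonoOn_update_slope {S : Set ℝ} {f : ℝ → ℝ} {a f' : ℝ}
    (hf : StrictConvexOn ℝ S f) (ha : a ∈ S) (hf' : HasDerivAt f f' a) :
    StrictMonoOn (Function.update (slope f a) a f') S := by
  intro x hx y hy hxy
  rcases eq_or_ne x a with rfl | hxa
  · simpa [hxy.ne'] using hf.lt_slope_of_hasDerivAt hx hy hxy hf'
  rcases eq_or_ne y a with rfl | hya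
  · simpa [hxa, slope_comm] using hf.slope_lt_of_hasDerivAt hx hy hxy hf'
  simpa [hxa, hya, slope_def_field] using hf.secant_strict_mono ha hx hy hxa hya hxy

theorem qlog_eq_update_slope_rpow {z : ℝ} (r : ℝ) :
    qlog r z = Function.update (slope (fun s : ℝ => z ^ s) 0) 0 (Real.log z) (1 - r) := by
  rcases eq_or_ne r 1 with rfl | hr
  · simp [qlog]
  · have hr₁ : 1 - r ≠ 0 := sub_ne_zero.mpr hr.symm
    simp [qlog, hr, hr₁, slope_def_field]

theorem stmt_9 (z : ℝ) (hz0 : 0 < z) (hz1 : z ≠ 1) :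
    StrictAnti (fun r : ℝ => qlog r z) := by
  have hderiv : HasDerivAt (fun s : ℝ => z ^ s) (Real.log z) 0 := by
    simpa using (Real.hasStrictDerivAt_const_rpow hz0 0).hasDerivAt
  have hmono := (strictConvexOn_rpow_left hz0 hz1).strictMonoOn_update_slope (mem_univ 0) hderiv
  simp only [qlog_eq_update_slope_rpow]
  exact (strictMonoOn_univ.mp hmono).comp_strictAnti fun _ _ h => by linarith
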